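/- arXiv:2411.05488 — 3 statements merged into one kernel-verified Lean document; each statement's English description precedes it below -/
import Mathlib

section
/- Let α ∈ (0,1), κ > 1 with κ(1−α) < 1, and 0 ≤ r ≤ t. Then ∫_0^r [ (r−s)^{−(1−α)} − (t−s)^{−(1−α)} ]^κ ds ≤ ∫_0^r [ (r−s)^{−κ(1−α)} − (t−s)^{−κ(1−α)} ] ds ≤ (t−r)^{1−κ(1−α)} / (1−κ(1−α)). -/
/-!
Superadditivity of `x ↦ x ^ κ` on `[0, ∞)` for `κ ≥ 1` gives `(a - b) ^ κ ≤ a ^ κ - b ^ κ` for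
`a = (r - s) ^ (-(1 - α)) ≥ b = (t - s) ^ (-(1 - α))`, which is the first inequality pointwise.
The middle integral is explicit, `(r ^ β - t ^ β + (t - r) ^ β) / β` with `β = 1 - κ (1 - α)`,
and `r ^ β ≤ t ^ β`.
-/

open MeasureTheory intervalIntegral Set

namespace Real

lemma sub_rpow_le_rpow_sub_rpow {a b p : ℝ} (hb : 0 ≤ b) (hba : b ≤ a) (hp : 1 ≤ p) :
    (a - b) ^ p ≤ a ^ p - b ^ p := by
  have h := add_rpow_le_rpow_add (sub_nonneg.2 hba) hb hp
  rw [sub_add_cancel] at h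
  linarith

lemma rpow_neg_sub_rpow_neg_nonneg {x y β : ℝ} (hx : 0 < x) (hxy : x ≤ y) (hβ : 0 ≤ β) :
    0 ≤ x ^ (-β) - y ^ (-β) :=
  sub_nonneg.2 (rpow_le_rpow_of_nonpos hx hxy (neg_nonpos.2 hβ))

lemma rpow_neg_sub_rpow_neg_rpow_le {x y β κ : ℝ} (hx : 0 < x) (hxy : x ≤ y) (hβ : 0 ≤ β)
    (hκ : 1 ≤ κ) :
    (x ^ (-β) - y ^ (-β)) ^ κ ≤ x ^ (-(κ * β)) - y ^ (-(κ * β)) := by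
  have h := sub_rpow_le_rpow_sub_rpow (rpow_nonneg (hx.le.trans hxy) (-β))
    (sub_nonneg.1 (rpow_neg_sub_rpow_neg_nonneg hx hxy hβ)) hκ
  rwa [← rpow_mul hx.le, ← rpow_mul (hx.le.trans hxy), neg_mul, mul_comm] at h

end Real

namespace intervalIntegral

/-- Unlike `integral_mono_on_of_le_Ioo`, no integrability of `f` is needed: a non-integrable
`f` has integral `0`. -/
lemma integral_mono_of_nonneg_on_Ioo {f g : ℝ → ℝ} {a b : ℝ} (hab : a ≤ b)
    (hg : IntervalIntegrable g volume a b) (hf : ∀ x ∈ Ioo a b, 0 ≤ f x)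
    (hfg : ∀ x ∈ Ioo a b, f x ≤ g x) :
    ∫ x in a..b, f x ≤ ∫ x in a..b, g x := by
  rw [integral_of_le hab, integral_of_le hab, integral_Ioc_eq_integral_Ioo,
    integral_Ioc_eq_integral_Ioo]
  exact integral_mono_of_nonneg (ae_restrict_of_forall_mem measurableSet_Ioo hf)
    (hg.1.mono_set Ioo_subset_Ioc_self) (ae_restrict_of_forall_mem measurableSet_Ioo hfg)

lemma intervalIntegrable_const_sub_rpow {a b c p : ℝ} (hp : -1 < p) :
    IntervalIntegrable (fun s => (c - s) ^ p) volume a b := by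
  simpa using (intervalIntegrable_rpow' hp (a := c - a) (b := c - b)).comp_sub_left c

lemma integral_const_sub_rpow_neg {a b c γ : ℝ} (hγ : γ < 1) :
    ∫ s in a..b, (c - s) ^ (-γ) = ((c - a) ^ (1 - γ) - (c - b) ^ (1 - γ)) / (1 - γ) := by
  rw [integral_comp_sub_left (fun x => x ^ (-γ)) c, integral_rpow (Or.inl (by linarith)),
    neg_add_eq_sub]

end intervalIntegral

section SingularKernel

variable {r t : ℝ}

lemma integral_rpow_neg_kernel_diff_le {γ : ℝ} (hγ : γ < 1) (hr : 0 ≤ r) (hrt : r ≤ t) :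
    ∫ s in (0 : ℝ)..r, ((r - s) ^ (-γ) - (t - s) ^ (-γ)) ≤ (t - r) ^ (1 - γ) / (1 - γ) := by
  have hp : -1 < -γ := by linarith
  rw [integral_sub (intervalIntegrable_const_sub_rpow hp) (intervalIntegrable_const_sub_rpow hp),
    integral_const_sub_rpow_neg hγ, integral_const_sub_rpow_neg hγ, sub_self,
    Real.zero_rpow (by linarith), div_sub_div_same, div_le_div_iff_of_pos_right (by linarith)]
  have : r ^ (1 - γ) ≤ t ^ (1 - γ) := Real.rpow_le_rpow hr hrt (by linarith)
  simp only [sub_zero]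
  linarith

lemma integral_kernel_diff_rpow_le {β κ : ℝ} (hβ : 0 ≤ β) (hκ : 1 ≤ κ) (hκβ : κ * β < 1)
    (hr : 0 ≤ r) (hrt : r ≤ t) :
    ∫ s in (0 : ℝ)..r, ((r - s) ^ (-β) - (t - s) ^ (-β)) ^ κ ≤
      ∫ s in (0 : ℝ)..r, ((r - s) ^ (-(κ * β)) - (t - s) ^ (-(κ * β))) := by
  have hp : -1 < -(κ * β) := by linarith
  refine integral_mono_of_nonneg_on_Ioo hr
    ((intervalIntegrable_const_sub_rpow hp).sub (intervalIntegrable_const_sub_rpow hp))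
    (fun s hs => ?_) (fun s hs => ?_)
  · exact Real.rpow_nonneg
      (Real.rpow_neg_sub_rpow_neg_nonneg (sub_pos.2 hs.2) (by linarith) hβ) κ
  · exact Real.rpow_neg_sub_rpow_neg_rpow_le (sub_pos.2 hs.2) (by linarith) hβ hκ

end SingularKernel

/-- For `α ∈ (0,1)`, `κ > 1` with `κ(1-α) < 1`, and `0 ≤ r ≤ t`:
`∫_0^r [(r-s)^{-(1-α)} - (t-s)^{-(1-α)}]^κ ds
  ≤ ∫_0^r [(r-s)^{-κ(1-α)} - (t-s)^{-κ(1-α)}] ds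
  ≤ (t-r)^{1-κ(1-α)} / (1-κ(1-α))`. -/
theorem kernel_difference_integral_bound (α κ r t : ℝ)
    (hα : α ∈ Set.Ioo (0 : ℝ) 1) (hκ : 1 < κ) (hκα : κ * (1 - α) < 1)
    (hr : 0 ≤ r) (hrt : r ≤ t) :
    (∫ s in (0 : ℝ)..r, ((r - s) ^ (-(1 - α)) - (t - s) ^ (-(1 - α))) ^ κ) ≤
        (∫ s in (0 : ℝ)..r, ((r - s) ^ (-(κ * (1 - α))) - (t - s) ^ (-(κ * (1 - α))))) ∧
      (∫ s in (0 : ℝ)..r, ((r - s) ^ (-(κ * (1 - α))) - (t - s) ^ (-(κ * (1 - α))))) ≤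
        (t - r) ^ (1 - κ * (1 - α)) / (1 - κ * (1 - α)) :=
  ⟨integral_kernel_diff_rpow_le (sub_nonneg.2 hα.2.le) hκ.le hκα hr hrt,
    integral_rpow_neg_kernel_diff_le hκα hr hrt⟩
end

section
/- Let α ∈ (0,1), T > 0, and γ ∈ AC^α([0,T],ℝ^k) with fractional derivative u = D^α_{0+}(γ − γ_0) ∈ L^∞. Define a(t | r, γ) := γ_t for t ∈ [0,r] and a(t | r, γ) := γ_0 + (1/Γ(α)) ∫_0^r u_s (t−s)^{α−1} ds for t ∈ (r,T]. Then for t ∈ [r,T], (1/Γ(α)) |∫_0^r u_s (t−s)^{α−1} ds| ≤ ‖γ − γ_0‖_{∞;[0,t]}. -/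
/-!
For `0 < r < t` let `K ξ = (t - r)^α (r - ξ)^(-α) / (t - ξ)` (`tailKernel`). The Möbius substitution
`y = (t - σ)(r - ξ) / ((r - σ)(t - ξ))`, a cross-ratio, maps `(σ, r)` onto `(0, 1)` and turns
`∫_σ^r K ξ (ξ - σ)^(α-1) dξ` into the Beta integral `B(1 - α, α)`, so that
`∫_σ^r K ξ (ξ - σ)^(α-1) dξ = Γ(α) Γ(1 - α) (t - σ)^(α-1)`.
By Fubini, `Γ(α) Γ(1 - α) ∫_0^r (t - s)^(α-1) u s ds = ∫_0^r K ξ ∫_0^ξ (ξ - s)^(α-1) u s ds dξ`,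
and the inner integrals are `Γ(α) (γ ξ - γ₀)`. The weight `K ≥ 0` has total mass at most
`Γ(α) Γ(1 - α)`, since `K ξ ≤ t^(1-α) K ξ ξ^(α-1)` and the right side integrates to `Γ(α) Γ(1 - α)`
by the identity with `σ = 0`.
-/

open MeasureTheory Set

lemma ofReal_beta_integrand (a b : ℝ) {x : ℝ} (hx : x ∈ Icc (0 : ℝ) 1) :
    (x : ℂ) ^ ((a : ℂ) - 1) * (1 - (x : ℂ)) ^ ((b : ℂ) - 1) =
      ((x ^ (a - 1) * (1 - x) ^ (b - 1) : ℝ) : ℂ) := by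
  push_cast [Complex.ofReal_cpow hx.1, Complex.ofReal_cpow (sub_nonneg.2 hx.2)]
  rfl

lemma integrableOn_rpow_mul_one_sub_rpow {a b : ℝ} (ha : 0 < a) (hb : 0 < b) :
    IntegrableOn (fun x : ℝ => x ^ (a - 1) * (1 - x) ^ (b - 1)) (Ioo 0 1) := by
  have hc := (Complex.betaIntegral_convergent (u := a) (v := b) (by simpa) (by simpa)).1
  refine (IntegrableOn.congr_fun hc.re (fun x hx => ?_) measurableSet_Ioc).mono_set
    Ioo_subset_Ioc_self
  simp only [ofReal_beta_integrand a b (Ioc_subset_Icc_self hx), RCLike.re_to_complex,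
    Complex.ofReal_re]

lemma integral_rpow_mul_one_sub_rpow {a b : ℝ} (ha : 0 < a) (hb : 0 < b) :
    ∫ x in Ioo 0 1, x ^ (a - 1) * (1 - x) ^ (b - 1) =
      Real.Gamma a * Real.Gamma b / Real.Gamma (a + b) := by
  have hβ : Complex.betaIntegral a b =
      ((∫ x in (0 : ℝ)..1, x ^ (a - 1) * (1 - x) ^ (b - 1) : ℝ) : ℂ) := by
    rw [Complex.betaIntegral, ← intervalIntegral.integral_ofReal]
    refine intervalIntegral.integral_congr fun x hx => ?_
    exact ofReal_beta_integrand a b (by rwa [uIcc_of_le zero_le_one] at hx)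
  have key := Complex.Gamma_mul_Gamma_eq_betaIntegral (s := a) (t := b) (by simpa) (by simpa)
  rw [hβ, ← Complex.ofReal_add, Complex.Gamma_ofReal, Complex.Gamma_ofReal, Complex.Gamma_ofReal]
    at key
  rw [eq_div_iff (Real.Gamma_pos_of_pos (add_pos ha hb)).ne', ← integral_Ioc_eq_integral_Ioo,
    ← intervalIntegral.integral_of_le zero_le_one]
  exact_mod_cast (mul_comm _ _).trans key.symm

lemma integral_sub_rpow {α : ℝ} (hα : 0 < α) {τ : ℝ} (hτ : 0 ≤ τ) :
    ∫ s in Ioo 0 τ, (τ - s) ^ (α - 1) = τ ^ α / α := by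
  rw [← integral_Ioc_eq_integral_Ioo, ← intervalIntegral.integral_of_le hτ,
    intervalIntegral.integral_comp_sub_left (fun x => x ^ (α - 1)),
    integral_rpow (Or.inl (by linarith)), sub_self, sub_zero, sub_add_cancel,
    Real.zero_rpow hα.ne', sub_zero]

lemma integrableOn_sub_rpow {α : ℝ} (hα : 0 < α) (τ : ℝ) :
    IntegrableOn (fun s => (τ - s) ^ (α - 1)) (Ioo 0 τ) := by
  have h := ((intervalIntegral.intervalIntegrable_rpow' (r := α - 1) (a := 0) (b := τ)
    (by linarith)).comp_sub_left τ).symm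
  rw [sub_self, sub_zero] at h
  exact h.1.mono_set Ioo_subset_Ioc_self

noncomputable def tailKernel (α r t ξ : ℝ) : ℝ := (t - r) ^ α * (r - ξ) ^ (-α) / (t - ξ)

lemma tailKernel_nonneg {α r t : ℝ} (hrt : r ≤ t) {ξ : ℝ} (hξ : ξ ≤ r) :
    0 ≤ tailKernel α r t ξ :=
  div_nonneg (mul_nonneg (Real.rpow_nonneg (sub_nonneg.2 hrt) _)
    (Real.rpow_nonneg (sub_nonneg.2 hξ) _)) (by linarith)

noncomputable def crossRatio (σ r t ξ : ℝ) : ℝ := (t - σ) * (r - ξ) / ((r - σ) * (t - ξ))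

section CrossRatio

variable {σ r t : ℝ}

lemma hasDerivAt_crossRatio (hσr : σ ≠ r) {ξ : ℝ} (hξt : ξ ≠ t) :
    HasDerivAt (crossRatio σ r t) (-((t - σ) * (t - r) / ((r - σ) * (t - ξ) ^ 2))) ξ := by
  have hC : r - σ ≠ 0 := sub_ne_zero.2 hσr.symm
  have hD : t - ξ ≠ 0 := sub_ne_zero.2 hξt.symm
  have hnum : HasDerivAt (fun y => (t - σ) * (r - y)) (-(t - σ)) ξ := by
    simpa using ((hasDerivAt_id ξ).const_sub r).const_mul (t - σ)
  have hden : HasDerivAt (fun y => (r - σ) * (t - y)) (-(r - σ)) ξ := by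
    simpa using ((hasDerivAt_id ξ).const_sub t).const_mul (r - σ)
  refine (hnum.div hden (mul_ne_zero hC hD)).congr_deriv ?_
  field_simp
  ring

lemma one_sub_crossRatio (hσr : σ ≠ r) {ξ : ℝ} (hξt : ξ ≠ t) :
    1 - crossRatio σ r t ξ = (ξ - σ) * (t - r) / ((r - σ) * (t - ξ)) := by
  have hC : r - σ ≠ 0 := sub_ne_zero.2 hσr.symm
  have hD : t - ξ ≠ 0 := sub_ne_zero.2 hξt.symm
  rw [crossRatio]
  field_simp
  ring

variable (hσr : σ < r) (hrt : r < t)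
include hσr hrt

lemma crossRatio_mem_Ioo {ξ : ℝ} (hξ : ξ ∈ Ioo σ r) : crossRatio σ r t ξ ∈ Ioo 0 1 := by
  obtain ⟨h1, h2⟩ := hξ
  have hpos : 0 < 1 - crossRatio σ r t ξ := by
    rw [one_sub_crossRatio hσr.ne (by linarith)]
    exact div_pos (mul_pos (by linarith) (by linarith)) (mul_pos (by linarith) (by linarith))
  refine ⟨div_pos (mul_pos ?_ ?_) (mul_pos ?_ ?_), by linarith⟩ <;> linarith

lemma image_crossRatio_Ioo : crossRatio σ r t '' Ioo σ r = Ioo 0 1 := by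
  refine Subset.antisymm (image_subset_iff.2 fun ξ hξ => crossRatio_mem_Ioo hσr hrt hξ) ?_
  have hcont : ContinuousOn (crossRatio σ r t) (Icc σ r) := fun ξ hξ =>
    (hasDerivAt_crossRatio hσr.ne (by linarith [hξ.2])).continuousAt.continuousWithinAt
  have h := intermediate_value_Ioo' hσr.le hcont
  have hr : crossRatio σ r t r = 0 := by simp [crossRatio]
  have hσ : crossRatio σ r t σ = 1 := by
    rw [crossRatio, mul_comm]; exact div_self (by nlinarith)
  rwa [hr, hσ] at h

lemma injOn_crossRatio : InjOn (crossRatio σ r t) (Ioo σ r) := by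
  refine (strictAntiOn_of_deriv_neg (convex_Ioo σ r) (fun ξ hξ => ?_) fun ξ hξ => ?_).injOn
  · exact (hasDerivAt_crossRatio hσr.ne (by linarith [hξ.2])).continuousAt.continuousWithinAt
  rw [interior_Ioo] at hξ
  rw [(hasDerivAt_crossRatio hσr.ne (by linarith [hξ.2])).deriv, neg_neg_iff_pos]
  have : 0 < t - ξ := by linarith [hξ.2]
  exact div_pos (mul_pos (by linarith) (by linarith)) (mul_pos (by linarith) (by positivity))

lemma tailKernel_mul_rpow_eq (α : ℝ) {ξ : ℝ} (hξ : ξ ∈ Ioo σ r) :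
    tailKernel α r t ξ * (ξ - σ) ^ (α - 1) = (t - σ) ^ (α - 1) *
      (|-((t - σ) * (t - r) / ((r - σ) * (t - ξ) ^ 2))| •
        (crossRatio σ r t ξ ^ (1 - α - 1) * (1 - crossRatio σ r t ξ) ^ (α - 1))) := by
  obtain ⟨h1, h2⟩ := hξ
  rw [one_sub_crossRatio hσr.ne (by linarith), abs_neg, smul_eq_mul, crossRatio, tailKernel,
    sub_sub_cancel_left]
  have hA : 0 < t - σ := by linarith
  have hB : 0 < r - ξ := by linarith
  have hC : 0 < r - σ := by linarith
  have hD : 0 < t - ξ := by linarith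
  have hE : 0 < ξ - σ := by linarith
  have hF : 0 < t - r := by linarith
  generalize t - σ = A at hA ⊢
  generalize r - ξ = B at hB ⊢
  generalize r - σ = C at hC ⊢
  generalize t - ξ = D at hD ⊢
  generalize ξ - σ = E at hE ⊢
  generalize t - r = F at hF ⊢
  have hsub : ∀ {x : ℝ}, 0 < x → x ^ (α - 1) = x ^ α / x := fun hx => Real.rpow_sub_one hx.ne' α
  rw [abs_of_pos (by positivity), Real.rpow_neg hB.le, Real.rpow_neg (by positivity),
    hsub (x := E * F / (C * D)) (by positivity), hsub hE, hsub hA,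
    Real.div_rpow (by positivity) (by positivity), Real.div_rpow (by positivity) (by positivity),
    Real.mul_rpow hA.le hB.le, Real.mul_rpow hC.le hD.le, Real.mul_rpow hE.le hF.le]
  have := Real.rpow_pos_of_pos hA α
  have := Real.rpow_pos_of_pos hB α
  have := Real.rpow_pos_of_pos hC α
  have := Real.rpow_pos_of_pos hD α
  have := Real.rpow_pos_of_pos hE α
  have := Real.rpow_pos_of_pos hF α
  field_simp

lemma integrableOn_tailKernel_mul_rpow {α : ℝ} (hα : α ∈ Ioo 0 1) :
    IntegrableOn (fun ξ => tailKernel α r t ξ * (ξ - σ) ^ (α - 1)) (Ioo σ r) := by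
  have h := integrableOn_rpow_mul_one_sub_rpow (sub_pos.2 hα.2) hα.1
  rw [← image_crossRatio_Ioo hσr hrt, integrableOn_image_iff_integrableOn_abs_deriv_smul
    measurableSet_Ioo
    (fun ξ hξ => (hasDerivAt_crossRatio hσr.ne (by linarith [hξ.2])).hasDerivWithinAt)
    (injOn_crossRatio hσr hrt)] at h
  exact IntegrableOn.congr_fun (h.const_mul _)
    (fun ξ hξ => (tailKernel_mul_rpow_eq hσr hrt α hξ).symm) measurableSet_Ioo

lemma integral_tailKernel_mul_rpow {α : ℝ} (hα : α ∈ Ioo 0 1) :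
    ∫ ξ in Ioo σ r, tailKernel α r t ξ * (ξ - σ) ^ (α - 1) =
      Real.Gamma α * Real.Gamma (1 - α) * (t - σ) ^ (α - 1) := by
  have h := integral_rpow_mul_one_sub_rpow (sub_pos.2 hα.2) hα.1
  rw [← image_crossRatio_Ioo hσr hrt, integral_image_eq_integral_abs_deriv_smul
    measurableSet_Ioo
    (fun ξ hξ => (hasDerivAt_crossRatio hσr.ne (by linarith [hξ.2])).hasDerivWithinAt)
    (injOn_crossRatio hσr hrt), sub_add_cancel, Real.Gamma_one, div_one] at h
  rw [setIntegral_congr_fun measurableSet_Ioo fun ξ hξ => tailKernel_mul_rpow_eq hσr hrt α hξ,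
    MeasureTheory.integral_const_mul, h]
  ring

end CrossRatio

section Triangle

variable {E : Type*} [NormedAddCommGroup E] {a b : ℝ}

lemma integrable_ite_const_lt {σ : ℝ} (hσ : a ≤ σ) {g : ℝ → E} (hg : IntegrableOn g (Ioo σ b)) :
    Integrable (fun ξ => if σ < ξ then g ξ else 0) (volume.restrict (Ioo a b)) := by
  simp_rw [← mem_Ioi, ← indicator_apply]
  rw [integrable_indicator_iff measurableSet_Ioi, IntegrableOn,
    Measure.restrict_restrict measurableSet_Ioi, Ioi_inter_Ioo, max_eq_left hσ]
  exact hg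

variable [NormedSpace ℝ E]

lemma setIntegral_Ioo_ite_lt_const {ξ : ℝ} (hξ : ξ ≤ b) (g : ℝ → E) :
    ∫ σ in Ioo a b, (if σ < ξ then g σ else 0) = ∫ σ in Ioo a ξ, g σ := by
  simp_rw [← mem_Iio, ← indicator_apply, setIntegral_indicator measurableSet_Iio, Ioo_inter_Iio,
    min_eq_right hξ]

lemma setIntegral_Ioo_ite_const_lt {σ : ℝ} (hσ : a ≤ σ) (g : ℝ → E) :
    ∫ ξ in Ioo a b, (if σ < ξ then g ξ else 0) = ∫ ξ in Ioo σ b, g ξ := by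
  simp_rw [← mem_Ioi, ← indicator_apply, setIntegral_indicator measurableSet_Ioi, Ioo_inter_Ioi,
    max_eq_right hσ]

lemma integral_Ioo_integral_Ioo_swap {F : ℝ → ℝ → E}
    (hF : Integrable (Function.uncurry fun ξ σ => if σ < ξ then F ξ σ else 0)
      ((volume.restrict (Ioo a b)).prod (volume.restrict (Ioo a b)))) :
    ∫ ξ in Ioo a b, ∫ σ in Ioo a ξ, F ξ σ = ∫ σ in Ioo a b, ∫ ξ in Ioo σ b, F ξ σ := by
  rw [← setIntegral_congr_fun measurableSet_Ioo fun ξ hξ =>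
      setIntegral_Ioo_ite_lt_const hξ.2.le _,
    ← setIntegral_congr_fun measurableSet_Ioo fun σ hσ =>
      setIntegral_Ioo_ite_const_lt hσ.1.le fun ξ => F ξ σ]
  exact integral_integral_swap hF

end Triangle

section Tail

variable {E : Type*} [NormedAddCommGroup E] [NormedSpace ℝ E] {α r t M : ℝ} {u : ℝ → E}

lemma norm_integral_rpow_smul_le (hα : 0 < α) {τ : ℝ} (hτ : 0 ≤ τ)
    (hM : ∀ s ∈ Ioo 0 τ, ‖u s‖ ≤ M) :
    ‖∫ s in Ioo 0 τ, (τ - s) ^ (α - 1) • u s‖ ≤ M * (τ ^ α / α) := by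
  rw [← integral_sub_rpow hα hτ, ← MeasureTheory.integral_const_mul]
  refine norm_integral_le_of_norm_le ((integrableOn_sub_rpow hα τ).const_mul M)
    ((ae_restrict_mem measurableSet_Ioo).mono fun s hs => ?_)
  rw [norm_smul, Real.norm_of_nonneg (Real.rpow_nonneg (sub_nonneg.2 hs.2.le) _), mul_comm M]
  exact mul_le_mul_of_nonneg_left (hM s hs) (Real.rpow_nonneg (sub_nonneg.2 hs.2.le) _)

lemma integrable_tailKernel_triangle (hα : α ∈ Ioo 0 1) (hrt : r < t)
    (hu : StronglyMeasurable u) (hM : ∀ s ∈ Ioo 0 r, ‖u s‖ ≤ M) :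
    Integrable (Function.uncurry fun ξ σ =>
        if σ < ξ then (tailKernel α r t ξ * (ξ - σ) ^ (α - 1)) • u σ else 0)
      ((volume.restrict (Ioo 0 r)).prod (volume.restrict (Ioo 0 r))) := by
  have hmeas : StronglyMeasurable (Function.uncurry fun ξ σ =>
      if σ < ξ then (tailKernel α r t ξ * (ξ - σ) ^ (α - 1)) • u σ else 0) :=
    StronglyMeasurable.ite (measurableSet_lt measurable_snd measurable_fst)
      ((by unfold tailKernel; fun_prop :
        Measurable fun p : ℝ × ℝ => tailKernel α r t p.1 * (p.1 - p.2) ^ (α - 1)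
        ).stronglyMeasurable.smul (hu.comp_measurable measurable_snd)) stronglyMeasurable_const
  have hnorm : ∀ σ ∈ Ioo 0 r, ∫ ξ in Ioo 0 r,
      ‖if σ < ξ then (tailKernel α r t ξ * (ξ - σ) ^ (α - 1)) • u σ else 0‖ =
        Real.Gamma α * Real.Gamma (1 - α) * (t - σ) ^ (α - 1) * ‖u σ‖ := by
    intro σ hσ
    simp_rw [apply_ite norm, norm_zero]
    rw [setIntegral_Ioo_ite_const_lt hσ.1.le, ← integral_tailKernel_mul_rpow hσ.2 hrt hα,
      ← MeasureTheory.integral_mul_const]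
    refine setIntegral_congr_fun measurableSet_Ioo fun ξ hξ => ?_
    rw [norm_smul, Real.norm_of_nonneg (mul_nonneg (tailKernel_nonneg hrt.le hξ.2.le)
      (Real.rpow_nonneg (sub_nonneg.2 hξ.1.le) _))]
  rw [integrable_prod_iff' hmeas.aestronglyMeasurable]
  refine ⟨?_, ?_⟩
  · filter_upwards [ae_restrict_mem measurableSet_Ioo] with σ hσ
    exact integrable_ite_const_lt hσ.1.le
      ((integrableOn_tailKernel_mul_rpow hσ.2 hrt hα).smul_const (u σ))
  · refine Measure.integrableOn_of_bounded
      (M := Real.Gamma α * Real.Gamma (1 - α) * (t - r) ^ (α - 1) * M) measure_Ioo_lt_top.ne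
      hmeas.norm.integral_prod_left'.aestronglyMeasurable ?_
    filter_upwards [ae_restrict_mem measurableSet_Ioo] with σ hσ
    have hΓ : 0 < Real.Gamma α * Real.Gamma (1 - α) :=
      mul_pos (Real.Gamma_pos_of_pos hα.1) (Real.Gamma_pos_of_pos (sub_pos.2 hα.2))
    simp only [Function.uncurry_apply_pair]
    rw [Real.norm_of_nonneg (integral_nonneg fun _ => norm_nonneg _), hnorm σ hσ]
    refine mul_le_mul (mul_le_mul_of_nonneg_left ?_ hΓ.le) (hM σ hσ) (norm_nonneg _)
      (by positivity)
    exact Real.rpow_le_rpow_of_nonpos (by linarith) (by linarith [hσ.2]) (by linarith [hα.2])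

lemma smul_integral_eq_integral_tailKernel_smul [CompleteSpace E] (hα : α ∈ Ioo 0 1)
    (hrt : r < t) (hu : StronglyMeasurable u) (hM : ∀ s ∈ Ioo 0 r, ‖u s‖ ≤ M) :
    (Real.Gamma α * Real.Gamma (1 - α)) • ∫ s in Ioo 0 r, (t - s) ^ (α - 1) • u s =
      ∫ ξ in Ioo 0 r, tailKernel α r t ξ • ∫ s in Ioo 0 ξ, (ξ - s) ^ (α - 1) • u s := by
  calc (Real.Gamma α * Real.Gamma (1 - α)) • ∫ s in Ioo 0 r, (t - s) ^ (α - 1) • u s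
      = ∫ σ in Ioo 0 r, ∫ ξ in Ioo σ r, (tailKernel α r t ξ * (ξ - σ) ^ (α - 1)) • u σ := by
        rw [← MeasureTheory.integral_smul]
        refine setIntegral_congr_fun measurableSet_Ioo fun σ hσ => ?_
        rw [_root_.integral_smul_const, integral_tailKernel_mul_rpow hσ.2 hrt hα, smul_smul]
    _ = ∫ ξ in Ioo 0 r, ∫ σ in Ioo 0 ξ, (tailKernel α r t ξ * (ξ - σ) ^ (α - 1)) • u σ :=
        (integral_Ioo_integral_Ioo_swap (integrable_tailKernel_triangle hα hrt hu hM)).symm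
    _ = _ := by simp_rw [mul_smul, MeasureTheory.integral_smul]

lemma norm_integral_rpow_smul_le_of_lt [CompleteSpace E] (hα : α ∈ Ioo 0 1) (hr : 0 < r)
    (hrt : r < t) (hu : StronglyMeasurable u) (hM : ∀ s ∈ Ioo 0 r, ‖u s‖ ≤ M) {S : ℝ}
    (hS : ∀ ξ ∈ Ioo 0 r, ‖∫ s in Ioo 0 ξ, (ξ - s) ^ (α - 1) • u s‖ ≤ S) :
    ‖∫ s in Ioo 0 r, (t - s) ^ (α - 1) • u s‖ ≤ S := by
  set c := Real.Gamma α * Real.Gamma (1 - α)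
  have hc : 0 < c :=
    mul_pos (Real.Gamma_pos_of_pos hα.1) (Real.Gamma_pos_of_pos (sub_pos.2 hα.2))
  have ht : 0 < t := hr.trans hrt
  have ht1 : t ^ (1 - α) * t ^ (α - 1) = 1 := by rw [← Real.rpow_add ht]; norm_num
  have hbound : ∀ ξ ∈ Ioo 0 r,
      ‖tailKernel α r t ξ • ∫ s in Ioo 0 ξ, (ξ - s) ^ (α - 1) • u s‖ ≤
        S * t ^ (1 - α) * (tailKernel α r t ξ * (ξ - 0) ^ (α - 1)) := by
    intro ξ hξ
    have hK := tailKernel_nonneg (α := α) hrt.le hξ.2.le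
    have hS0 : 0 ≤ S := (norm_nonneg _).trans (hS ξ hξ)
    have hpow : 1 ≤ t ^ (1 - α) * ξ ^ (α - 1) := by
      calc (1 : ℝ) = t ^ (1 - α) * t ^ (α - 1) := ht1.symm
        _ ≤ t ^ (1 - α) * ξ ^ (α - 1) := mul_le_mul_of_nonneg_left
            (Real.rpow_le_rpow_of_nonpos hξ.1 (hξ.2.le.trans hrt.le) (by linarith [hα.2]))
            (by positivity)
    rw [norm_smul, Real.norm_of_nonneg hK, sub_zero]
    calc tailKernel α r t ξ * ‖∫ s in Ioo 0 ξ, (ξ - s) ^ (α - 1) • u s‖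
        ≤ tailKernel α r t ξ * (S * (t ^ (1 - α) * ξ ^ (α - 1))) :=
          mul_le_mul_of_nonneg_left ((hS ξ hξ).trans (le_mul_of_one_le_right hS0 hpow)) hK
      _ = _ := by ring
  have hmain : c * ‖∫ s in Ioo 0 r, (t - s) ^ (α - 1) • u s‖ ≤ c * S := by
    calc c * ‖∫ s in Ioo 0 r, (t - s) ^ (α - 1) • u s‖
        = ‖∫ ξ in Ioo 0 r, tailKernel α r t ξ • ∫ s in Ioo 0 ξ, (ξ - s) ^ (α - 1) • u s‖ := by
          rw [← smul_integral_eq_integral_tailKernel_smul hα hrt hu hM, norm_smul,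
            Real.norm_of_nonneg hc.le]
      _ ≤ ∫ ξ in Ioo 0 r, S * t ^ (1 - α) * (tailKernel α r t ξ * (ξ - 0) ^ (α - 1)) :=
          norm_integral_le_of_norm_le ((integrableOn_tailKernel_mul_rpow hr hrt hα).const_mul _)
            ((ae_restrict_mem measurableSet_Ioo).mono hbound)
      _ = c * S := by
          rw [MeasureTheory.integral_const_mul, integral_tailKernel_mul_rpow hr hrt hα, sub_zero]
          linear_combination (S * c) * ht1
  exact le_of_mul_le_mul_left hmain hc

lemma norm_integral_rpow_smul_le_of_le [CompleteSpace E] (hα : α ∈ Ioo 0 1) (hr : 0 ≤ r)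
    (hrt : r ≤ t) (hu : StronglyMeasurable u) (hM : ∀ s ∈ Ioo 0 r, ‖u s‖ ≤ M) {S : ℝ}
    (hS : ∀ ξ ∈ Icc 0 r, ‖∫ s in Ioo 0 ξ, (ξ - s) ^ (α - 1) • u s‖ ≤ S) :
    ‖∫ s in Ioo 0 r, (t - s) ^ (α - 1) • u s‖ ≤ S := by
  rcases hr.eq_or_lt with rfl | hr
  · simpa using hS 0 ⟨le_rfl, le_rfl⟩
  rcases hrt.eq_or_lt with rfl | hrt
  · exact hS r ⟨hr.le, le_rfl⟩
  exact norm_integral_rpow_smul_le_of_lt hα hr hrt hu hM fun ξ hξ =>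
    hS ξ (Ioo_subset_Icc_self hξ)

end Tail

theorem tail_functional_sup_bound_general {k : ℕ} (α T : ℝ)
    (hα : α ∈ Set.Ioo (0 : ℝ) 1)
    (u : ℝ → EuclideanSpace ℝ (Fin k)) (hu_meas : Measurable u)
    (hu_bdd : ∃ M : ℝ, ∀ s ∈ Set.Icc (0 : ℝ) T, ‖u s‖ ≤ M)
    (γ0 : EuclideanSpace ℝ (Fin k)) (γ : ℝ → EuclideanSpace ℝ (Fin k))
    (hγ : ∀ t ∈ Set.Icc (0 : ℝ) T,
      γ t = γ0 + (1 / Real.Gamma α) • ∫ s in (0 : ℝ)..t, ((t - s) ^ (α - 1)) • u s) :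
    ∀ r t : ℝ, 0 ≤ r → r ≤ t → t ≤ T →
      (1 / Real.Gamma α) * ‖∫ s in (0 : ℝ)..r, ((t - s) ^ (α - 1)) • u s‖ ≤
        ⨆ τ : Set.Icc (0 : ℝ) t, ‖γ (τ : ℝ) - γ0‖ := by
  intro r t hr hrt htT
  obtain ⟨M, hM⟩ := hu_bdd
  have hΓ : 0 < Real.Gamma α := Real.Gamma_pos_of_pos hα.1
  have hM' : ∀ τ ≤ T, ∀ s ∈ Ioo 0 τ, ‖u s‖ ≤ M := fun τ hτ s hs =>
    hM s ⟨hs.1.le, hs.2.le.trans hτ⟩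
  have hJ : ∀ ξ ∈ Icc 0 T,
      ‖∫ s in Ioo 0 ξ, (ξ - s) ^ (α - 1) • u s‖ = Real.Gamma α * ‖γ ξ - γ0‖ := by
    intro ξ hξ
    rw [hγ ξ hξ, add_sub_cancel_left, norm_smul, Real.norm_of_nonneg (by positivity),
      ← mul_assoc, mul_one_div_cancel hΓ.ne', one_mul, intervalIntegral.integral_of_le hξ.1,
      integral_Ioc_eq_integral_Ioo]
  have hbdd : BddAbove (range fun τ : Icc 0 t => ‖γ τ - γ0‖) := by
    refine ⟨M * (t ^ α / α) / Real.Gamma α, forall_mem_range.2 fun ⟨τ, hτ⟩ => ?_⟩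
    have hτT : τ ∈ Icc 0 T := ⟨hτ.1, hτ.2.trans htT⟩
    rw [le_div_iff₀' hΓ, ← hJ τ hτT]
    have hM0 : 0 ≤ M := (norm_nonneg _).trans (hM 0 ⟨le_rfl, hr.trans (hrt.trans htT)⟩)
    exact (norm_integral_rpow_smul_le hα.1 hτ.1 (hM' τ hτT.2)).trans <|
      mul_le_mul_of_nonneg_left
        (div_le_div_of_nonneg_right (Real.rpow_le_rpow hτ.1 hτ.2 hα.1.le) hα.1.le) hM0
  rw [one_div_mul_eq_div, div_le_iff₀' hΓ, intervalIntegral.integral_of_le hr,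
    integral_Ioc_eq_integral_Ioo]
  refine norm_integral_rpow_smul_le_of_le hα hr hrt hu_meas.stronglyMeasurable
    (hM' r (hrt.trans htT)) fun ξ hξ => ?_
  rw [hJ ξ ⟨hξ.1, hξ.2.trans (hrt.trans htT)⟩]
  exact mul_le_mul_of_nonneg_left (le_ciSup hbdd ⟨ξ, hξ.1, hξ.2.trans hrt⟩) hΓ.le

/-- Lemma 7.2 in Gomoyunov (2020): for `γ ∈ AC^α` with fractional derivative `u`, the tail
term of the functional `a(·|r,γ)` satisfies, for `t ∈ [r,T]`,
`(1/Γ(α)) ‖∫_0^r (t-s)^{α-1} u_s ds‖ ≤ ‖γ - γ_0‖_{∞;[0,t]}`. -/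
theorem tail_functional_sup_bound {k : ℕ} (α T : ℝ)
    (hα : α ∈ Set.Ioo (0 : ℝ) 1) (hT : 0 < T)
    (u : ℝ → EuclideanSpace ℝ (Fin k)) (hu_meas : Measurable u)
    (hu_bdd : ∃ M : ℝ, ∀ s ∈ Set.Icc (0 : ℝ) T, ‖u s‖ ≤ M)
    (γ0 : EuclideanSpace ℝ (Fin k)) (γ : ℝ → EuclideanSpace ℝ (Fin k))
    (hγ : ∀ t ∈ Set.Icc (0 : ℝ) T,
      γ t = γ0 + (1 / Real.Gamma α) • ∫ s in (0 : ℝ)..t, ((t - s) ^ (α - 1)) • u s) :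
    ∀ r t : ℝ, 0 ≤ r → r ≤ t → t ≤ T →
      (1 / Real.Gamma α) * ‖∫ s in (0 : ℝ)..r, ((t - s) ^ (α - 1)) • u s‖ ≤
        ⨆ τ : Set.Icc (0 : ℝ) t, ‖γ (τ : ℝ) - γ0‖ :=
  tail_functional_sup_bound_general α T hα u hu_meas hu_bdd γ0 γ hγ
end

section
/- Let p ≥ 2, α ∈ (⌊p⌋/p, 1), κ ≤ 1/(1 − α + ⌊p⌋/p), and γ ∈ AC^α([0,T],ℝ^k) with u = D^α_{0+}(γ − γ_0). Then for 0 ≤ r ≤ t ≤ T, the (p/⌊p⌋)-variation of γ on [r,t] satisfies ‖γ‖_{p/⌊p⌋;[r,t]}^{p/⌊p⌋} ≤ C_{α,p,T} [ (∫_r^t |u_s|^{κ/(κ−1)} ds)^{p(κ−1)/(⌊p⌋κ)} + (∫_0^r |u_s|^{κ/(κ−1)} ds)^{p(κ−1)/(⌊p⌋κ)} ] (t−r)^{(p/⌊p⌋)(α−1+1/κ)}. -/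
open MeasureTheory intervalIntegral
open scoped BigOperators

/-- The `p`-variation seminorm of a path `X` on `[s,t]`. -/
noncomputable def pVariation {E : Type*} [NormedAddCommGroup E]
    (p : ℝ) (X : ℝ → E) (s t : ℝ) : ℝ :=
  ⨆ n : ℕ, ⨆ u : Fin (n + 1) → ℝ,
    ⨆ _ : Monotone u ∧ u 0 = s ∧ u (Fin.last n) = t,
      (∑ i : Fin n, ‖X (u i.succ) - X (u i.castSucc)‖ ^ p) ^ (1 / p)

/-!
Up to the factor `1/Γ(α)`, the increment `γ_b - γ_a` splits into `∫_a^b (b-s)^{α-1} u_s ds` and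
`∫_0^a ((b-s)^{α-1} - (a-s)^{α-1}) u_s ds`. Hölder's inequality with exponents `κ` and
`κ' = κ/(κ-1)` bounds each by an `L^{κ'}` norm of `u` times an `L^κ` norm of a kernel, and both
kernel norms are at most `((b-a)^{κδ}/(κδ))^{1/κ}`, `δ = α - 1 + 1/κ`; for the difference of kernels
this is the inequality `(x - y)^κ ≤ x^κ - y^κ`, after which the integral telescopes. Raising to the
power `q = p/⌊p⌋` gives `‖γ_b - γ_a‖^q ≤ C S (b-a)^{qδ}`, with `S` the two norms of `u` in the
statement. The hypothesis on `κ` says exactly that `qδ ≥ 1`, so this bound is superadditive in the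
interval and passes to every partition sum over `[r,t]`.
-/

open Set

theorem Fin.sum_succ_sub_castSucc {M : Type*} [AddCommGroup M] {n : ℕ} (v : Fin (n + 1) → M) :
    ∑ i : Fin n, (v i.succ - v i.castSucc) = v (Fin.last n) - v 0 := by
  induction n with
  | zero => simp
  | succ n ih =>
    rw [Fin.sum_univ_castSucc]
    simp only [Fin.succ_castSucc]
    rw [ih (fun i => v i.castSucc)]
    simp only [Fin.succ_last, Fin.castSucc_zero]
    abel

namespace Real

theorem rpow_le_rpow_sub_one_mul {x y θ : ℝ} (hx : 0 ≤ x) (hxy : x ≤ y) (hθ : 1 ≤ θ) :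
    x ^ θ ≤ y ^ (θ - 1) * x := by
  calc x ^ θ = x ^ (θ - 1) * x := by
        rw [← rpow_add_one' hx (by linarith), sub_add_cancel]
    _ ≤ y ^ (θ - 1) * x := by gcongr

theorem add_rpow_le_two_rpow_mul {x y p : ℝ} (hx : 0 ≤ x) (hy : 0 ≤ y) (hp : 1 ≤ p) :
    (x + y) ^ p ≤ 2 ^ (p - 1) * (x ^ p + y ^ p) := by
  lift x to NNReal using hx
  lift y to NNReal using hy
  exact_mod_cast NNReal.rpow_add_le_mul_rpow_add_rpow x y hp

theorem sub_rpow_le_rpow_sub_rpow_s12 {x y p : ℝ} (hy : 0 ≤ y) (hyx : y ≤ x) (hp : 1 ≤ p) :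
    (x - y) ^ p ≤ x ^ p - y ^ p := by
  have := add_rpow_le_rpow_add (sub_nonneg.2 hyx) hy hp
  rw [sub_add_cancel] at this
  linarith

theorem rpow_add_rpow_le_of_le {x y I J σ q : ℝ} (hx : 0 ≤ x) (hy : 0 ≤ y) (hI : 0 ≤ I)
    (hJ : 0 ≤ J) (hσ₀ : 0 ≤ σ) (hσ₁ : σ ≤ 1) (hq : 1 ≤ q) (hxI : x ≤ I) (hyJ : y ≤ J + I) :
    (x ^ σ + y ^ σ) ^ q ≤ 2 ^ q * 2 ^ (q - 1) * (I ^ (σ * q) + J ^ (σ * q)) := by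
  have hsum : x ^ σ + y ^ σ ≤ 2 * (I ^ σ + J ^ σ) := by
    have := rpow_add_le_add_rpow hJ hI hσ₀ hσ₁
    have := rpow_le_rpow hx hxI hσ₀
    have := rpow_le_rpow hy hyJ hσ₀
    have := rpow_nonneg hJ σ
    linarith
  calc (x ^ σ + y ^ σ) ^ q ≤ (2 * (I ^ σ + J ^ σ)) ^ q := by gcongr
    _ = 2 ^ q * (I ^ σ + J ^ σ) ^ q := by rw [mul_rpow (by norm_num) (by positivity)]
    _ ≤ 2 ^ q * (2 ^ (q - 1) * ((I ^ σ) ^ q + (J ^ σ) ^ q)) := by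
        gcongr
        exact add_rpow_le_two_rpow_mul (by positivity) (by positivity) hq
    _ = 2 ^ q * 2 ^ (q - 1) * (I ^ (σ * q) + J ^ (σ * q)) := by
        rw [← rpow_mul hI, ← rpow_mul hJ, mul_assoc]

end Real

section PVariation

variable {E : Type*} [NormedAddCommGroup E] {q : ℝ} {X : ℝ → E} {s t : ℝ}

theorem pVariation_nonneg : 0 ≤ pVariation q X s t :=
  Real.iSup_nonneg fun _ => Real.iSup_nonneg fun _ => Real.iSup_nonneg fun _ =>
    Real.rpow_nonneg (Finset.sum_nonneg fun _ _ => Real.rpow_nonneg (norm_nonneg _) _) _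

theorem pVariation_rpow_le_of_sum_le {B : ℝ} (hq : 0 < q) (hB : 0 ≤ B)
    (h : ∀ (n : ℕ) (v : Fin (n + 1) → ℝ), Monotone v → v 0 = s → v (Fin.last n) = t →
      ∑ i : Fin n, ‖X (v i.succ) - X (v i.castSucc)‖ ^ q ≤ B) :
    pVariation q X s t ^ q ≤ B := by
  have hB' : 0 ≤ B ^ (1 / q) := Real.rpow_nonneg hB _
  have hle : pVariation q X s t ≤ B ^ (1 / q) :=
    Real.iSup_le (fun n => Real.iSup_le (fun v => Real.iSup_le (fun ⟨hv, hv0, hvn⟩ =>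
      Real.rpow_le_rpow (Finset.sum_nonneg fun _ _ => Real.rpow_nonneg (norm_nonneg _) _)
        (h n v hv hv0 hvn) (by positivity)) hB') hB') hB'
  calc pVariation q X s t ^ q ≤ (B ^ (1 / q)) ^ q := by gcongr; exact pVariation_nonneg
    _ = B := by rw [← Real.rpow_mul hB, one_div_mul_cancel hq.ne', Real.rpow_one]

theorem pVariation_rpow_le_of_norm_sub_rpow_le {C θ : ℝ} (hq : 0 < q) (hθ : 1 ≤ θ)
    (hC : 0 ≤ C) (hst : s ≤ t)
    (h : ∀ a b, s ≤ a → a ≤ b → b ≤ t → ‖X b - X a‖ ^ q ≤ C * (b - a) ^ θ) :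
    pVariation q X s t ^ q ≤ C * (t - s) ^ θ := by
  refine pVariation_rpow_le_of_sum_le hq (by positivity) fun n v hv hv0 hvn => ?_
  have hmem : ∀ i, s ≤ v i ∧ v i ≤ t := fun i =>
    ⟨hv0 ▸ hv (Fin.zero_le i), hvn ▸ hv (Fin.le_last i)⟩
  calc ∑ i : Fin n, ‖X (v i.succ) - X (v i.castSucc)‖ ^ q
      ≤ ∑ i : Fin n, C * (t - s) ^ (θ - 1) * (v i.succ - v i.castSucc) := by
        gcongr with i
        have hvi : v i.castSucc ≤ v i.succ := hv (Fin.castSucc_le_succ i)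
        calc _ ≤ C * (v i.succ - v i.castSucc) ^ θ :=
              h _ _ (hmem _).1 hvi (hmem _).2
          _ ≤ C * ((t - s) ^ (θ - 1) * (v i.succ - v i.castSucc)) := by
              gcongr
              exact Real.rpow_le_rpow_sub_one_mul (sub_nonneg.2 hvi)
                (by linarith [(hmem i.castSucc).1, (hmem i.succ).2]) hθ
          _ = _ := by ring
    _ = C * (t - s) ^ θ := by
        rw [← Finset.mul_sum, Fin.sum_succ_sub_castSucc, hv0, hvn, mul_assoc,
          ← Real.rpow_add_one' (sub_nonneg.2 hst) (by linarith), sub_add_cancel]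

end PVariation

section Kernel

variable {α κ : ℝ}

theorem sub_one_mul_add_one_pos (hκ : 0 < κ) (hδ : 0 < α - 1 + 1 / κ) : 0 < (α - 1) * κ + 1 := by
  have := mul_pos hκ hδ
  rwa [mul_add, mul_one_div_cancel hκ.ne', mul_comm] at this

theorem intervalIntegrable_sub_rpow {e : ℝ} (he : -1 < e) (c x y : ℝ) :
    IntervalIntegrable (fun s => (c - s) ^ e) volume x y := by
  simpa using (intervalIntegrable_rpow' (a := c - x) (b := c - y) he).comp_sub_left c

theorem integral_sub_rpow_s12 {e : ℝ} (he : -1 < e) (c x y : ℝ) :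
    ∫ s in x..y, (c - s) ^ e = ((c - x) ^ (e + 1) - (c - y) ^ (e + 1)) / (e + 1) := by
  rw [integral_comp_sub_left (fun s => s ^ e) c, integral_rpow (Or.inl he)]

theorem integral_norm_sub_rpow_rpow_Ioc {a b : ℝ} (hab : a ≤ b) (he : -1 < (α - 1) * κ) :
    IntegrableOn (fun s => ‖(b - s) ^ (α - 1)‖ ^ κ) (Ioc a b) ∧
      ∫ s in Ioc a b, ‖(b - s) ^ (α - 1)‖ ^ κ
        = (b - a) ^ ((α - 1) * κ + 1) / ((α - 1) * κ + 1) := by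
  have hker : ∀ s ∈ Ioc a b, ‖(b - s) ^ (α - 1)‖ ^ κ = (b - s) ^ ((α - 1) * κ) := fun s hs => by
    have hbs : 0 ≤ b - s := sub_nonneg.2 hs.2
    rw [Real.norm_of_nonneg (Real.rpow_nonneg hbs _), ← Real.rpow_mul hbs]
  refine ⟨?_, ?_⟩
  · rw [integrableOn_congr_fun hker measurableSet_Ioc,
      ← intervalIntegrable_iff_integrableOn_Ioc_of_le hab]
    exact intervalIntegrable_sub_rpow he b a b
  · rw [setIntegral_congr_fun measurableSet_Ioc hker, ← integral_of_le hab,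
      integral_sub_rpow_s12 he, sub_self, Real.zero_rpow (by linarith), sub_zero]

theorem norm_rpow_sub_rpow_rpow_le {x y : ℝ} (hx : 0 < x) (hxy : x ≤ y) (hα : α ≤ 1)
    (hκ : 1 ≤ κ) : ‖y ^ (α - 1) - x ^ (α - 1)‖ ^ κ ≤ x ^ ((α - 1) * κ) - y ^ ((α - 1) * κ) := by
  have hyx : y ^ (α - 1) ≤ x ^ (α - 1) := Real.rpow_le_rpow_of_nonpos hx hxy (by linarith)
  rw [Real.norm_of_nonpos (sub_nonpos.2 hyx), neg_sub, Real.rpow_mul hx.le,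
    Real.rpow_mul (hx.le.trans hxy)]
  exact Real.sub_rpow_le_rpow_sub_rpow_s12 (Real.rpow_nonneg (hx.le.trans hxy) _) hyx hκ

theorem integral_norm_sub_rpow_sub_sub_rpow_rpow_Ioc_le {a b : ℝ} (ha : 0 ≤ a) (hab : a ≤ b)
    (hα : α ≤ 1) (hκ : 1 ≤ κ) (he : -1 < (α - 1) * κ) :
    IntegrableOn (fun s => ‖(b - s) ^ (α - 1) - (a - s) ^ (α - 1)‖ ^ κ) (Ioc 0 a) ∧
      ∫ s in Ioc 0 a, ‖(b - s) ^ (α - 1) - (a - s) ^ (α - 1)‖ ^ κ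
        ≤ (b - a) ^ ((α - 1) * κ + 1) / ((α - 1) * κ + 1) := by
  set f := fun s => ‖(b - s) ^ (α - 1) - (a - s) ^ (α - 1)‖ ^ κ
  set g := fun s => (a - s) ^ ((α - 1) * κ) - (b - s) ^ ((α - 1) * κ)
  have hg : IntegrableOn g (Ioc 0 a) := by
    rw [← intervalIntegrable_iff_integrableOn_Ioc_of_le ha]
    exact (intervalIntegrable_sub_rpow he a 0 a).sub (intervalIntegrable_sub_rpow he b 0 a)
  -- not at `s = a`, where `(a - s) ^ (α - 1) = 0 ^ (α - 1) = 0` in Lean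
  have hfg : ∀ s ∈ Ioo 0 a, f s ≤ g s := fun s hs =>
    norm_rpow_sub_rpow_rpow_le (sub_pos.2 hs.2) (by linarith) hα hκ
  have hf : IntegrableOn f (Ioc 0 a) := by
    refine hg.mono' (by fun_prop) ?_
    rw [← restrict_Ioo_eq_restrict_Ioc]
    filter_upwards [ae_restrict_mem measurableSet_Ioo] with s hs
    rw [Real.norm_of_nonneg (Real.rpow_nonneg (norm_nonneg _) _)]
    exact hfg s hs
  refine ⟨hf, ?_⟩
  have hρ : 0 < (α - 1) * κ + 1 := by linarith
  calc ∫ s in Ioc 0 a, f s = ∫ s in Ioo 0 a, f s := integral_Ioc_eq_integral_Ioo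
    _ ≤ ∫ s in Ioo 0 a, g s :=
        setIntegral_mono_on (hf.mono_set Ioo_subset_Ioc_self)
          (hg.mono_set Ioo_subset_Ioc_self) measurableSet_Ioo hfg
    _ = ∫ s in (0 : ℝ)..a, g s := by rw [integral_of_le ha, integral_Ioc_eq_integral_Ioo]
    _ = (a ^ ((α - 1) * κ + 1) - b ^ ((α - 1) * κ + 1) + (b - a) ^ ((α - 1) * κ + 1))
          / ((α - 1) * κ + 1) := by
        rw [integral_sub (intervalIntegrable_sub_rpow he a 0 a)
          (intervalIntegrable_sub_rpow he b 0 a), integral_sub_rpow_s12 he, integral_sub_rpow_s12 he]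
        simp only [sub_zero, sub_self, Real.zero_rpow hρ.ne']
        ring
    _ ≤ (b - a) ^ ((α - 1) * κ + 1) / ((α - 1) * κ + 1) := by
        gcongr
        linarith [Real.rpow_le_rpow ha hab hρ.le]

end Kernel

section IntervalLp

theorem memLp_ofReal_of_integrable_norm_rpow {X F : Type*} [MeasurableSpace X]
    [NormedAddCommGroup F] {μ : Measure X} {f : X → F} {p : ℝ} (hp : 0 < p)
    (hf : AEStronglyMeasurable f μ) (hi : Integrable (fun s => ‖f s‖ ^ p) μ) :
    MemLp f (ENNReal.ofReal p) μ := by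
  refine (integrable_norm_rpow_iff hf (by simpa using hp) ENNReal.ofReal_ne_top).1 ?_
  rwa [ENNReal.toReal_ofReal hp.le]

variable {E : Type*} [NormedAddCommGroup E] {u : ℝ → E}

theorem MeasureTheory.MemLp.mono_Ioc {p : ENNReal} {x y x' y' : ℝ}
    (hu : MemLp u p (volume.restrict (Ioc x y))) (hx : x ≤ x') (hy : y' ≤ y) :
    MemLp u p (volume.restrict (Ioc x' y')) :=
  hu.mono_measure (Measure.restrict_mono (Ioc_subset_Ioc hx hy) le_rfl)

theorem MeasureTheory.MemLp.intervalIntegrable_norm_rpow {p x y : ℝ} (hp : 0 < p) (hxy : x ≤ y)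
    (hu : MemLp u ⊤ (volume.restrict (Ioc x y))) :
    IntervalIntegrable (fun s => ‖u s‖ ^ p) volume x y := by
  have := (hu.mono_exponent (le_top (a := ENNReal.ofReal p))).integrable_norm_rpow
    (by simpa using hp) ENNReal.ofReal_ne_top
  rw [ENNReal.toReal_ofReal hp.le] at this
  exact (intervalIntegrable_iff_integrableOn_Ioc_of_le hxy).2 this

end IntervalLp

section FracIntegral

variable {E : Type*} [NormedAddCommGroup E] [NormedSpace ℝ E] {u : ℝ → E}

theorem norm_integral_smul_le_of_holderConjugate {g : ℝ → ℝ} {κ κ' x y : ℝ} (hxy : x ≤ y)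
    (hκ : κ.HolderConjugate κ') (hg : MemLp g (ENNReal.ofReal κ) (volume.restrict (Ioc x y)))
    (hu : MemLp u (ENNReal.ofReal κ') (volume.restrict (Ioc x y))) :
    ‖∫ s in x..y, g s • u s‖
      ≤ (∫ s in Ioc x y, ‖g s‖ ^ κ) ^ (1 / κ) * (∫ s in x..y, ‖u s‖ ^ κ') ^ (1 / κ') := by
  have holder := integral_mul_norm_le_Lp_mul_Lq hκ hg hu.norm
  simp only [norm_norm] at holder
  rw [integral_of_le hxy, integral_of_le hxy]
  refine (MeasureTheory.norm_integral_le_integral_norm _).trans (le_of_eq_of_le ?_ holder)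
  simp only [norm_smul]

theorem IntervalIntegrable.smul_of_memLp_top {g : ℝ → ℝ} {x y : ℝ} (hxy : x ≤ y)
    (hg : IntervalIntegrable g volume x y) (hu : MemLp u ⊤ (volume.restrict (Ioc x y))) :
    IntervalIntegrable (fun s => g s • u s) volume x y := by
  rw [intervalIntegrable_iff_integrableOn_Ioc_of_le hxy] at hg ⊢
  exact hg.smul_of_top_left hu

/-- The Riemann–Liouville integral `I^α_{0+} u`: the paper's `u = D^α_{0+}(γ - γ_0)` is
`γ = γ_0 + fracIntegral α u`. -/
noncomputable def fracIntegral (α : ℝ) (u : ℝ → E) (t : ℝ) : E :=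
  (1 / Real.Gamma α) • ∫ s in (0 : ℝ)..t, (t - s) ^ (α - 1) • u s

/-- `Γ(α)⁻¹` times the bound `((α - 1) κ + 1) ^ (-1/κ)` on the `L^κ` norm of the kernel
`(b - s) ^ (α - 1)` over an interval of unit length. -/
noncomputable def fracIntegralConst (α κ : ℝ) : ℝ :=
  1 / Real.Gamma α * (1 / ((α - 1) * κ + 1)) ^ (1 / κ)

variable {α κ κ' q a b r t : ℝ}

theorem fracIntegralConst_pos (hα : 0 < α) (hκ : 0 < κ) (hδ : 0 < α - 1 + 1 / κ) :
    0 < fracIntegralConst α κ :=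
  mul_pos (one_div_pos.2 (Real.Gamma_pos_of_pos hα))
    (Real.rpow_pos_of_pos (one_div_pos.2 (sub_one_mul_add_one_pos hκ hδ)) _)

theorem fracIntegral_sub_fracIntegral (hα : 0 < α) (ha : 0 ≤ a) (hab : a ≤ b)
    (hu : MemLp u ⊤ (volume.restrict (Ioc 0 b))) :
    fracIntegral α u b - fracIntegral α u a = (1 / Real.Gamma α) •
      ((∫ s in a..b, (b - s) ^ (α - 1) • u s)
        + ∫ s in (0 : ℝ)..a, ((b - s) ^ (α - 1) - (a - s) ^ (α - 1)) • u s) := by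
  have he : -1 < α - 1 := by linarith
  have hu₀ : MemLp u ⊤ (volume.restrict (Ioc 0 a)) :=
    hu.mono_Ioc le_rfl hab
  have hb₀ := (intervalIntegrable_sub_rpow he b 0 a).smul_of_memLp_top ha hu₀
  have hbₐ := (intervalIntegrable_sub_rpow he b a b).smul_of_memLp_top hab
    (hu.mono_Ioc ha le_rfl)
  have ha₀ := (intervalIntegrable_sub_rpow he a 0 a).smul_of_memLp_top ha hu₀
  simp only [fracIntegral, sub_smul]
  rw [integral_sub hb₀ ha₀, ← integral_add_adjacent_intervals hb₀ hbₐ]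
  simp only [smul_add, smul_sub]
  abel

theorem norm_fracIntegral_sub_le (hα₀ : 0 < α) (hα₁ : α ≤ 1) (hκ : κ.HolderConjugate κ')
    (hδ : 0 < α - 1 + 1 / κ) (ha : 0 ≤ a) (hab : a ≤ b)
    (hu : MemLp u ⊤ (volume.restrict (Ioc 0 b))) :
    ‖fracIntegral α u b - fracIntegral α u a‖
      ≤ fracIntegralConst α κ *
        ((∫ s in a..b, ‖u s‖ ^ κ') ^ (1 / κ') + (∫ s in (0 : ℝ)..a, ‖u s‖ ^ κ') ^ (1 / κ')) *
        (b - a) ^ (α - 1 + 1 / κ) := by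
  have hκ₀ : 0 < κ := hκ.pos
  have hρ : 0 < (α - 1) * κ + 1 := sub_one_mul_add_one_pos hκ₀ hδ
  have he : -1 < (α - 1) * κ := by linarith
  have hkernel : ((b - a) ^ ((α - 1) * κ + 1) / ((α - 1) * κ + 1)) ^ (1 / κ)
      = (1 / ((α - 1) * κ + 1)) ^ (1 / κ) * (b - a) ^ (α - 1 + 1 / κ) := by
    rw [div_eq_mul_one_div, Real.mul_rpow (by bound) (one_div_pos.2 hρ).le,
      ← Real.rpow_mul (by linarith), mul_comm]
    congr 2
    field_simp
  have huLp : ∀ x y, 0 ≤ x → y ≤ b →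
      MemLp u (ENNReal.ofReal κ') (volume.restrict (Ioc x y)) := fun x y hx hy =>
    (hu.mono_Ioc hx hy).mono_exponent le_top
  obtain ⟨hAi, hAv⟩ := integral_norm_sub_rpow_rpow_Ioc hab he
  obtain ⟨hBi, hBv⟩ := integral_norm_sub_rpow_sub_sub_rpow_rpow_Ioc_le ha hab hα₁ hκ.lt.le he
  have hA := norm_integral_smul_le_of_holderConjugate hab hκ
    (memLp_ofReal_of_integrable_norm_rpow hκ₀ (by fun_prop : Measurable _).aestronglyMeasurable
      hAi) (huLp a b ha le_rfl)
  have hB := norm_integral_smul_le_of_holderConjugate ha hκ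
    (memLp_ofReal_of_integrable_norm_rpow hκ₀ (by fun_prop : Measurable _).aestronglyMeasurable
      hBi) (huLp 0 a le_rfl hab)
  rw [hAv, hkernel] at hA
  have hB' : (∫ s in Ioc 0 a, ‖(b - s) ^ (α - 1) - (a - s) ^ (α - 1)‖ ^ κ) ^ (1 / κ)
      ≤ (1 / ((α - 1) * κ + 1)) ^ (1 / κ) * (b - a) ^ (α - 1 + 1 / κ) := by
    rw [← hkernel]
    exact Real.rpow_le_rpow (setIntegral_nonneg measurableSet_Ioc fun _ _ => by positivity) hBv
      (by positivity)
  rw [fracIntegral_sub_fracIntegral hα₀ ha hab hu, norm_smul,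
    Real.norm_of_nonneg (by positivity), fracIntegralConst]
  calc _ ≤ 1 / Real.Gamma α * (‖∫ s in a..b, (b - s) ^ (α - 1) • u s‖
        + ‖∫ s in (0 : ℝ)..a, ((b - s) ^ (α - 1) - (a - s) ^ (α - 1)) • u s‖) := by
        gcongr; exact norm_add_le _ _
    _ ≤ 1 / Real.Gamma α * ((1 / ((α - 1) * κ + 1)) ^ (1 / κ) * (b - a) ^ (α - 1 + 1 / κ)
          * (∫ s in a..b, ‖u s‖ ^ κ') ^ (1 / κ')
        + (1 / ((α - 1) * κ + 1)) ^ (1 / κ) * (b - a) ^ (α - 1 + 1 / κ)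
          * (∫ s in (0 : ℝ)..a, ‖u s‖ ^ κ') ^ (1 / κ')) := by
        gcongr
        exact hB.trans (mul_le_mul_of_nonneg_right hB'
          (Real.rpow_nonneg (integral_nonneg ha fun _ _ => by positivity) _))
    _ = _ := by ring

theorem norm_fracIntegral_sub_rpow_le (hα₀ : 0 < α) (hα₁ : α ≤ 1) (hκ : κ.HolderConjugate κ')
    (hδ : 0 < α - 1 + 1 / κ) (hq : 1 ≤ q) (hr : 0 ≤ r) (hra : r ≤ a) (hab : a ≤ b)
    (hbt : b ≤ t) (hu : MemLp u ⊤ (volume.restrict (Ioc 0 t))) :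
    ‖fracIntegral α u b - fracIntegral α u a‖ ^ q
      ≤ fracIntegralConst α κ ^ q * 2 ^ q * 2 ^ (q - 1) *
        ((∫ s in r..t, ‖u s‖ ^ κ') ^ (1 / κ' * q)
          + (∫ s in (0 : ℝ)..r, ‖u s‖ ^ κ') ^ (1 / κ' * q)) *
        (b - a) ^ (q * (α - 1 + 1 / κ)) := by
  have hκ'₀ : 0 < κ' := hκ.symm.pos
  have hint : ∀ x y, 0 ≤ x → x ≤ y → y ≤ t →
      IntervalIntegrable (fun s => ‖u s‖ ^ κ') volume x y := fun x y hx hxy hy =>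
    (hu.mono_Ioc hx hy).intervalIntegrable_norm_rpow hκ'₀ hxy
  have hnn : ∀ x y, x ≤ y → 0 ≤ ∫ s in x..y, ‖u s‖ ^ κ' := fun x y h =>
    integral_nonneg h fun _ _ => by positivity
  have hx : ∫ s in a..b, ‖u s‖ ^ κ' ≤ ∫ s in r..t, ‖u s‖ ^ κ' :=
    integral_mono_interval hra hab hbt (ae_of_all _ fun _ => by positivity)
      (hint r t hr (by linarith) le_rfl)
  have hy : ∫ s in (0 : ℝ)..a, ‖u s‖ ^ κ'
      ≤ (∫ s in (0 : ℝ)..r, ‖u s‖ ^ κ') + ∫ s in r..t, ‖u s‖ ^ κ' := by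
    rw [integral_add_adjacent_intervals (hint 0 r le_rfl hr (by linarith))
      (hint r t hr (by linarith) le_rfl)]
    exact integral_mono_interval le_rfl (by linarith) (by linarith)
      (ae_of_all _ fun _ => by positivity) (hint 0 t le_rfl (by linarith) le_rfl)
  have hσ₁ : 1 / κ' ≤ 1 := by rw [div_le_one hκ'₀]; exact hκ.symm.lt.le
  have hK : 0 ≤ fracIntegralConst α κ := (fracIntegralConst_pos hα₀ hκ.pos hδ).le
  have hXY : 0 ≤ (∫ s in a..b, ‖u s‖ ^ κ') ^ (1 / κ')
      + (∫ s in (0 : ℝ)..a, ‖u s‖ ^ κ') ^ (1 / κ') :=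
    add_nonneg (Real.rpow_nonneg (hnn a b hab) _) (Real.rpow_nonneg (hnn 0 a (hr.trans hra)) _)
  calc _ ≤ (fracIntegralConst α κ *
        ((∫ s in a..b, ‖u s‖ ^ κ') ^ (1 / κ') + (∫ s in (0 : ℝ)..a, ‖u s‖ ^ κ') ^ (1 / κ')) *
        (b - a) ^ (α - 1 + 1 / κ)) ^ q := by
        gcongr
        exact norm_fracIntegral_sub_le hα₀ hα₁ hκ hδ (hr.trans hra) hab
          (hu.mono_Ioc le_rfl hbt)
    _ = fracIntegralConst α κ ^ q *
        ((∫ s in a..b, ‖u s‖ ^ κ') ^ (1 / κ') + (∫ s in (0 : ℝ)..a, ‖u s‖ ^ κ') ^ (1 / κ')) ^ q *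
        (b - a) ^ (q * (α - 1 + 1 / κ)) := by
        rw [Real.mul_rpow (mul_nonneg hK hXY) (by bound), Real.mul_rpow hK hXY,
          ← Real.rpow_mul (by linarith), mul_comm (α - 1 + 1 / κ)]
    _ ≤ _ := by
        rw [mul_assoc _ (2 ^ q), mul_assoc _ (2 ^ q * _)]
        gcongr
        exact Real.rpow_add_rpow_le_of_le (hnn a b hab) (hnn 0 a (hr.trans hra))
          (hnn r t (by linarith)) (hnn 0 r hr) (one_div_pos.2 hκ'₀).le hσ₁ hq hx hy

end FracIntegral

theorem pVariation_fracIntegral_bound_general {k : ℕ} (p α κ T : ℝ)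
    (hp : 2 ≤ p)
    (hα : α ∈ Set.Ioo ((⌊p⌋₊ : ℝ) / p) 1) (hκ : 1 < κ)
    (hκα : κ ≤ 1 / (1 - α + (⌊p⌋₊ : ℝ) / p)) :
    ∃ C : ℝ, 0 < C ∧
      ∀ (u : ℝ → EuclideanSpace ℝ (Fin k)) (γ0 : EuclideanSpace ℝ (Fin k))
        (γ : ℝ → EuclideanSpace ℝ (Fin k)), Measurable u →
        (∃ M : ℝ, ∀ s ∈ Set.Icc (0 : ℝ) T, ‖u s‖ ≤ M) →
        (∀ t ∈ Set.Icc (0 : ℝ) T,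
          γ t = γ0 + (1 / Real.Gamma α) • ∫ s in (0 : ℝ)..t, ((t - s) ^ (α - 1)) • u s) →
        ∀ r t : ℝ, 0 ≤ r → r ≤ t → t ≤ T →
          pVariation (p / (⌊p⌋₊ : ℝ)) γ r t ^ (p / (⌊p⌋₊ : ℝ)) ≤
            C * ((∫ s in r..t, ‖u s‖ ^ (κ / (κ - 1))) ^ (p * (κ - 1) / ((⌊p⌋₊ : ℝ) * κ)) +
                  (∫ s in (0 : ℝ)..r, ‖u s‖ ^ (κ / (κ - 1))) ^ (p * (κ - 1) / ((⌊p⌋₊ : ℝ) * κ))) *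
              (t - r) ^ ((p / (⌊p⌋₊ : ℝ)) * (α - 1 + 1 / κ)) := by
  obtain ⟨hα₀, hα₁⟩ := hα
  have hN : 0 < (⌊p⌋₊ : ℝ) := Nat.cast_pos.2 (Nat.floor_pos.2 (by linarith))
  have hNp : 0 < (⌊p⌋₊ : ℝ) / p := div_pos hN (by linarith)
  have hκ₀ : 0 < κ := by linarith
  have hδ : (⌊p⌋₊ : ℝ) / p ≤ α - 1 + 1 / κ := by
    linarith [(le_one_div hκ₀ (by linarith)).1 hκα]
  have hθ : 1 ≤ p / ⌊p⌋₊ * (α - 1 + 1 / κ) :=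
    le_of_eq_of_le (by field_simp) (mul_le_mul_of_nonneg_left hδ (by positivity))
  have hK := fracIntegralConst_pos (hNp.trans hα₀) hκ₀ (hNp.trans_le hδ)
  refine ⟨fracIntegralConst α κ ^ (p / ⌊p⌋₊) * 2 ^ (p / ⌊p⌋₊) * 2 ^ (p / ⌊p⌋₊ - 1),
    by positivity, fun u γ0 γ hu ⟨M, hM⟩ hγ r t hr hrt htT => ?_⟩
  have hu_top : MemLp u ⊤ (volume.restrict (Ioc 0 t)) :=
    memLp_top_of_bound hu.aestronglyMeasurable M (ae_restrict_of_forall_mem measurableSet_Ioc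
      fun s hs => hM s ⟨hs.1.le, hs.2.trans htT⟩)
  have hnn : ∀ x y : ℝ, x ≤ y → 0 ≤ ∫ s in x..y, ‖u s‖ ^ (κ / (κ - 1)) := fun x y h =>
    integral_nonneg h fun _ _ => by positivity
  rw [show p * (κ - 1) / ((⌊p⌋₊ : ℝ) * κ) = 1 / (κ / (κ - 1)) * (p / ⌊p⌋₊) by field_simp]
  refine pVariation_rpow_le_of_norm_sub_rpow_le (by positivity) hθ
    (mul_nonneg (by positivity) (add_nonneg (Real.rpow_nonneg (hnn r t hrt) _)
      (Real.rpow_nonneg (hnn 0 r hr) _))) hrt fun a b hra hab hbt => ?_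
  rw [hγ b ⟨by linarith, by linarith⟩, hγ a ⟨by linarith, by linarith⟩, add_sub_add_left_eq_sub]
  exact norm_fracIntegral_sub_rpow_le (hNp.trans hα₀) hα₁.le
    (Real.HolderConjugate.conjExponent hκ) (hNp.trans_le hδ)
    ((one_le_div hN).2 (Nat.floor_le (by linarith))) hr hra hab hbt hu_top

/-- Proposition (cost function, fractional): for `γ ∈ AC^α([0,T],ℝ^k)` with
`α ∈ (⌊p⌋/p, 1)` and `κ ≤ 1/(1-α+⌊p⌋/p)`, the `(p/⌊p⌋)`-variation of `γ` satisfies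
`‖γ‖_{p/⌊p⌋;[r,t]}^{p/⌊p⌋} ≤ C_{α,p,T}[(∫_r^t |u|^{κ/(κ-1)})^{p(κ-1)/(⌊p⌋κ)}
  + (∫_0^r |u|^{κ/(κ-1)})^{p(κ-1)/(⌊p⌋κ)}](t-r)^{(p/⌊p⌋)(α-1+1/κ)}`. -/
theorem pVariation_fracIntegral_bound {k : ℕ} (p α κ T : ℝ)
    (hp : 2 ≤ p) (hT : 0 < T)
    (hα : α ∈ Set.Ioo ((⌊p⌋₊ : ℝ) / p) 1) (hκ : 1 < κ)
    (hκα : κ ≤ 1 / (1 - α + (⌊p⌋₊ : ℝ) / p)) :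
    ∃ C : ℝ, 0 < C ∧
      ∀ (u : ℝ → EuclideanSpace ℝ (Fin k)) (γ0 : EuclideanSpace ℝ (Fin k))
        (γ : ℝ → EuclideanSpace ℝ (Fin k)), Measurable u →
        (∃ M : ℝ, ∀ s ∈ Set.Icc (0 : ℝ) T, ‖u s‖ ≤ M) →
        (∀ t ∈ Set.Icc (0 : ℝ) T,
          γ t = γ0 + (1 / Real.Gamma α) • ∫ s in (0 : ℝ)..t, ((t - s) ^ (α - 1)) • u s) →
        ∀ r t : ℝ, 0 ≤ r → r ≤ t → t ≤ T →
          pVariation (p / (⌊p⌋₊ : ℝ)) γ r t ^ (p / (⌊p⌋₊ : ℝ)) ≤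
            C * ((∫ s in r..t, ‖u s‖ ^ (κ / (κ - 1))) ^ (p * (κ - 1) / ((⌊p⌋₊ : ℝ) * κ)) +
                  (∫ s in (0 : ℝ)..r, ‖u s‖ ^ (κ / (κ - 1))) ^ (p * (κ - 1) / ((⌊p⌋₊ : ℝ) * κ))) *
              (t - r) ^ ((p / (⌊p⌋₊ : ℝ)) * (α - 1 + 1 / κ)) :=
  pVariation_fracIntegral_bound_general p α κ T hp hα hκ hκα
end
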